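/- arXiv:2007.13621 — 5 statements merged into one kernel-verified Lean document; each statement's English description precedes it below -/
import Mathlib

section
/- Let P₊ solve the algebraic Riccati equation A*P₊ + P₊A - P₊BB*P₊ + C*C = 0 with A₊ := A - BB*P₊ invertible. Then x_s := A₊⁻¹ B B* A₊⁻ᵀ C* y_c, w_s := A₊⁻ᵀ C* y_c, u_s := -B*P₊ x_s - B* w_s, and λ_s := P₊ x_s + w_s satisfy the steady-state first-order optimality system: 0 = A x_s + B u_s, 0 = A* λ_s + C*(C x_s - y_c), and 0 = B* λ_s + u_s. -/
open Matrix

/-- The vectors `x_s = A₊⁻¹ B Bᵀ A₊⁻ᵀ Cᵀ y_c`, `w_s = A₊⁻ᵀ Cᵀ y_c`,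
`u_s = -Bᵀ P₊ x_s - Bᵀ w_s`, `lam_s = P₊ x_s + w_s` solve the steady-state
first-order optimality system. -/
theorem steady_state_optimality_system
    {n m k : ℕ} (A P : Matrix (Fin n) (Fin n) ℝ)
    (B : Matrix (Fin n) (Fin m) ℝ) (C : Matrix (Fin k) (Fin n) ℝ)
    (y_c : Fin k → ℝ)
    (hPsymm : P.IsSymm)
    (hric : Aᵀ * P + P * A - P * B * Bᵀ * P + Cᵀ * C = 0)
    (hinv : IsUnit (A - B * Bᵀ * P))
    (x_s w_s lam_s : Fin n → ℝ) (u_s : Fin m → ℝ)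
    (hx : x_s = ((A - B * Bᵀ * P)⁻¹ * B * Bᵀ * ((A - B * Bᵀ * P)ᵀ)⁻¹ * Cᵀ) *ᵥ y_c)
    (hw : w_s = (((A - B * Bᵀ * P)ᵀ)⁻¹ * Cᵀ) *ᵥ y_c)
    (hu : u_s = -(Bᵀ *ᵥ (P *ᵥ x_s)) - Bᵀ *ᵥ w_s)
    (hlam : lam_s = P *ᵥ x_s + w_s) :
    A *ᵥ x_s + B *ᵥ u_s = 0 ∧
    Aᵀ *ᵥ lam_s + Cᵀ *ᵥ (C *ᵥ x_s - y_c) = 0 ∧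
    Bᵀ *ᵥ lam_s + u_s = 0 := by
  have hd : IsUnit (A - B * Bᵀ * P).det := (Matrix.isUnit_iff_isUnit_det _).mp hinv
  have hdT : IsUnit ((A - B * Bᵀ * P)ᵀ).det := by rwa [Matrix.det_transpose]
  have h1 : (A - B * Bᵀ * P) * (A - B * Bᵀ * P)⁻¹ = 1 := Matrix.mul_nonsing_inv _ hd
  have h2 : (A - B * Bᵀ * P)ᵀ * ((A - B * Bᵀ * P)ᵀ)⁻¹ = 1 := Matrix.mul_nonsing_inv _ hdT
  have hPT : Pᵀ = P := hPsymm
  -- key vector fact 1 : Ap x_s = B Bᵀ w_s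
  have v1 : (A - B * Bᵀ * P) *ᵥ x_s = (B * Bᵀ) *ᵥ w_s := by
    rw [hx, hw, mulVec_mulVec, mulVec_mulVec]
    simp only [← Matrix.mul_assoc]
    rw [h1, Matrix.one_mul]
  -- key vector fact 2 : Apᵀ w_s = Cᵀ y_c
  have v2 : (A - B * Bᵀ * P)ᵀ *ᵥ w_s = Cᵀ *ᵥ y_c := by
    rw [hw, mulVec_mulVec]
    rw [← Matrix.mul_assoc, h2, Matrix.one_mul]
  -- expand v1
  have v1' : A *ᵥ x_s - (B * Bᵀ * P) *ᵥ x_s = (B * Bᵀ) *ᵥ w_s := by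
    rw [← Matrix.sub_mulVec]; exact v1
  -- P times v1
  have v4 : (P * A) *ᵥ x_s - (P * (B * Bᵀ * P)) *ᵥ x_s = (P * (B * Bᵀ)) *ᵥ w_s := by
    have := congrArg (fun v => P *ᵥ v) v1
    simpa [Matrix.mulVec_sub, Matrix.sub_mulVec, mulVec_mulVec, Matrix.mul_sub,
      Matrix.mul_assoc] using this
  -- expand v2
  have v2' : Aᵀ *ᵥ w_s - (P * (B * Bᵀ)) *ᵥ w_s = Cᵀ *ᵥ y_c := by
    have ht : (A - B * Bᵀ * P)ᵀ = Aᵀ - P * (B * Bᵀ) := by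
      rw [Matrix.transpose_sub, Matrix.transpose_mul, Matrix.transpose_mul,
        Matrix.transpose_transpose, hPT]
    rw [ht, Matrix.sub_mulVec] at v2
    exact v2
  -- riccati applied to x_s
  have v3 : (Aᵀ * P) *ᵥ x_s + (Cᵀ * C) *ᵥ x_s
      = (P * (B * Bᵀ * P)) *ᵥ x_s - (P * A) *ᵥ x_s := by
    have hr : Aᵀ * P + Cᵀ * C = P * (B * Bᵀ * P) - P * A := by
      have h := hric
      rw [← Matrix.mul_assoc, ← Matrix.mul_assoc]
      linear_combination (norm := noncomm_ring) h
    have := congrArg (fun M => M *ᵥ x_s) hr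
    simpa [Matrix.add_mulVec, Matrix.sub_mulVec] using this
  refine ⟨?_, ?_, ?_⟩
  · rw [hu]
    simp only [Matrix.mulVec_sub, Matrix.mulVec_neg, mulVec_mulVec, ← Matrix.mul_assoc]
    linear_combination v1'
  · rw [hlam]
    simp only [Matrix.mulVec_add, Matrix.mulVec_sub, mulVec_mulVec]
    linear_combination v3 - v4 + v2'
  · rw [hlam, hu, Matrix.mulVec_add]
    abel
end

section
/- A* λ_s + C*(C x_s - y_c) = 0, where x_s = A₊⁻¹ B B* A₊⁻ᵀ C* y_c and λ_s = P₊ x_s + A₊⁻ᵀ C* y_c, for any P₊ solving the algebraic Riccati equation with A₊ = A - BB*P₊ invertible. -/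
open Matrix

/-- The adjoint equation of the steady-state optimality system:
`Aᵀ lam_s + Cᵀ(C x_s - y_c) = 0` for `x_s = A₊⁻¹ B Bᵀ A₊⁻ᵀ Cᵀ y_c` and
`lam_s = P₊ x_s + A₊⁻ᵀ Cᵀ y_c`. -/
theorem steady_state_adjoint_equation
    {n m k : ℕ} (A P : Matrix (Fin n) (Fin n) ℝ)
    (B : Matrix (Fin n) (Fin m) ℝ) (C : Matrix (Fin k) (Fin n) ℝ)
    (y_c : Fin k → ℝ)
    (hPsymm : P.IsSymm)
    (hric : Aᵀ * P + P * A - P * B * Bᵀ * P + Cᵀ * C = 0)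
    (hinv : IsUnit (A - B * Bᵀ * P))
    (x_s lam_s : Fin n → ℝ)
    (hx : x_s = ((A - B * Bᵀ * P)⁻¹ * B * Bᵀ * ((A - B * Bᵀ * P)ᵀ)⁻¹ * Cᵀ) *ᵥ y_c)
    (hlam : lam_s = P *ᵥ x_s + (((A - B * Bᵀ * P)ᵀ)⁻¹ * Cᵀ) *ᵥ y_c) :
    Aᵀ *ᵥ lam_s + Cᵀ *ᵥ (C *ᵥ x_s - y_c) = 0 := by
  set M := A - B * Bᵀ * P with hMdef
  set X := M⁻¹ * B * Bᵀ * (Mᵀ)⁻¹ * Cᵀ with hXdef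
  set N := (Mᵀ)⁻¹ * Cᵀ with hNdef
  have hdet : IsUnit M.det := (Matrix.isUnit_iff_isUnit_det M).mp hinv
  have hdetT : IsUnit (Mᵀ).det := by rwa [Matrix.det_transpose]
  have h1 : M * M⁻¹ = 1 := Matrix.mul_nonsing_inv M hdet
  have h2 : Mᵀ * (Mᵀ)⁻¹ = 1 := Matrix.mul_nonsing_inv _ hdetT
  have hAt : Aᵀ = Mᵀ + P * B * Bᵀ := by
    rw [hMdef, Matrix.transpose_sub, Matrix.transpose_mul, Matrix.transpose_mul,
      Matrix.transpose_transpose, hPsymm.eq]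
    simp only [Matrix.mul_assoc]
    abel
  have hMX : M * X = B * Bᵀ * N := by
    rw [hXdef, hNdef]
    rw [show M * (M⁻¹ * B * Bᵀ * Mᵀ⁻¹ * Cᵀ) = (M * M⁻¹) * (B * Bᵀ * (Mᵀ⁻¹ * Cᵀ)) by
      simp only [Matrix.mul_assoc], h1, Matrix.one_mul]
  have hAN : Aᵀ * N = Cᵀ + P * B * Bᵀ * N := by
    rw [hAt, hNdef, Matrix.add_mul,
      show Mᵀ * (Mᵀ⁻¹ * Cᵀ) = (Mᵀ * Mᵀ⁻¹) * Cᵀ by simp only [Matrix.mul_assoc],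
      h2, Matrix.one_mul]
  have hricc : Aᵀ * P + Cᵀ * C = -(P * M) := by
    have h : Aᵀ * P + Cᵀ * C - -(P * M) = Aᵀ * P + P * A - P * B * Bᵀ * P + Cᵀ * C := by
      rw [hMdef, Matrix.mul_sub]
      simp only [Matrix.mul_assoc]
      abel
    rw [← sub_eq_zero, h, hric]
  have key : Aᵀ * (P * X) + Aᵀ * N + (Cᵀ * (C * X) - Cᵀ) = 0 := by
    have e1 : Aᵀ * (P * X) + Cᵀ * (C * X) = (Aᵀ * P + Cᵀ * C) * X := by
      rw [Matrix.add_mul]; simp only [Matrix.mul_assoc]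
    have e2 : (Aᵀ * P + Cᵀ * C) * X = -(P * (B * Bᵀ * N)) := by
      rw [hricc, Matrix.neg_mul, Matrix.mul_assoc, hMX]
    calc Aᵀ * (P * X) + Aᵀ * N + (Cᵀ * (C * X) - Cᵀ)
        = (Aᵀ * (P * X) + Cᵀ * (C * X)) + Aᵀ * N - Cᵀ := by abel
      _ = -(P * (B * Bᵀ * N)) + (Cᵀ + P * B * Bᵀ * N) - Cᵀ := by rw [e1, e2, hAN]
      _ = 0 := by simp only [Matrix.mul_assoc]; abel
  subst hx hlam
  have h3 : Aᵀ *ᵥ (P *ᵥ (X *ᵥ y_c) + N *ᵥ y_c) + Cᵀ *ᵥ (C *ᵥ (X *ᵥ y_c) - y_c)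
      = (Aᵀ * (P * X) + Aᵀ * N + (Cᵀ * (C * X) - Cᵀ)) *ᵥ y_c := by
    simp only [Matrix.mulVec_add, Matrix.mulVec_sub, Matrix.add_mulVec, Matrix.sub_mulVec,
      Matrix.mulVec_mulVec]
  rw [h3, key, Matrix.zero_mulVec]
end

section
/- Suppose U(t) := exp(-(t₁-t)A₊)(I + W(t₁-t)(S - P₊)) is invertible for all relevant times, where W(τ) := W - exp(τA₊)W exp(τA₊*). Then for t ≤ s ≤ t₁: U(t)U(s)⁻¹ = exp((t-s)A₊) - W(t-s) exp((t₁-t)A₊*) S̃(t₁-s) exp((t₁-s)A₊), where S̃(τ) := (S - P₊)(I + W(τ)(S - P₊))⁻¹. -/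
/-!
Write `W(τ) = W - exp(τA) W exp(τAᵀ)`. The one fact behind the formula is the cocycle identity
`W(a + b) = W(a) + exp(aA) W(b) exp(aAᵀ)`, an immediate consequence of the group law of
`τ ↦ exp(τA)`. With `a = t₁ - t`, `b = t₁ - s` it turns `exp(-aA) W(a)` into
`exp(-aA) W(b) - W(b - a) exp(aAᵀ)`, and multiplying the claimed formula back by
`U(s) = exp(-bA)(I + W(b)(S - P))` then cancels term by term.
-/

open Matrix MeasureTheory NormedSpace
open scoped Matrix.Norms.L2Operator

variable {ι : Type*} [Fintype ι] [DecidableEq ι]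

theorem Matrix.exp_add_smul (A : Matrix ι ι ℝ) (a b : ℝ) :
    exp ((a + b) • A) = exp (a • A) * exp (b • A) := by
  rw [add_smul]
  exact exp_add_of_commute _ _ (((Commute.refl A).smul_left a).smul_right b)

/-- When `A` is Hurwitz and `W` is the controllability Gramian `∫₀^∞ exp(sA) B Bᵀ exp(sAᵀ) ds`,
this is the finite-horizon Gramian `∫₀^τ exp(sA) B Bᵀ exp(sAᵀ) ds`; in this form it makes sense
for every real `τ`. -/
noncomputable def finiteGramian (A W : Matrix ι ι ℝ) (τ : ℝ) : Matrix ι ι ℝ :=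
  W - exp (τ • A) * W * exp (τ • Aᵀ)

theorem finiteGramian_add (A W : Matrix ι ι ℝ) (a b : ℝ) :
    finiteGramian A W (a + b) =
      finiteGramian A W a + exp (a • A) * finiteGramian A W b * exp (a • Aᵀ) := by
  unfold finiteGramian
  rw [exp_add_smul A, add_comm a b, exp_add_smul Aᵀ]
  noncomm_ring

theorem exp_neg_smul_mul_one_add_finiteGramian_mul (A W K : Matrix ι ι ℝ) (a b : ℝ)
    (hN : IsUnit (1 + finiteGramian A W b * K)) :
    exp ((-a) • A) * (1 + finiteGramian A W a * K) =
      (exp ((b - a) • A) - finiteGramian A W (b - a) * exp (a • Aᵀ) *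
          (K * (1 + finiteGramian A W b * K)⁻¹) * exp (b • A)) *
        (exp ((-b) • A) * (1 + finiteGramian A W b * K)) := by
  set G := finiteGramian A W
  set N := 1 + G b * K
  have hG : G a = G b - exp (a • A) * G (b - a) * exp (a • Aᵀ) := by
    rw [eq_sub_iff_add_eq, ← finiteGramian_add, add_sub_cancel]
  have hN_inv : N⁻¹ * N = 1 := nonsing_inv_mul N ((isUnit_iff_isUnit_det N).mp hN)
  have hexp_a : exp ((-a) • A) * exp (a • A) = 1 := by
    rw [← exp_add_smul, neg_add_cancel, zero_smul, exp_zero]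
  have hexp_b : exp (b • A) * exp ((-b) • A) = 1 := by
    rw [← exp_add_smul, add_neg_cancel, zero_smul, exp_zero]
  have hexp_ba : exp ((b - a) • A) * exp ((-b) • A) = exp ((-a) • A) := by
    rw [← exp_add_smul]; ring_nf
  calc exp ((-a) • A) * (1 + G a * K)
      = exp ((-a) • A) * N - G (b - a) * exp (a • Aᵀ) * K := by
        simp only [hG, N, sub_mul, mul_add, mul_sub, mul_one, ← mul_assoc, hexp_a, one_mul]
        abel
    _ = _ := by
        rw [sub_mul, ← mul_assoc, hexp_ba]
        simp only [mul_assoc]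
        rw [← mul_assoc (exp (b • A)), hexp_b, one_mul, hN_inv, mul_one]

theorem state_transition_forward_formula_general
    {n : ℕ} (Ap : Matrix (Fin n) (Fin n) ℝ)
    (S P : Matrix (Fin n) (Fin n) ℝ) (t₁ : ℝ)
    (W : Matrix (Fin n) (Fin n) ℝ)
    (Wf : ℝ → Matrix (Fin n) (Fin n) ℝ)
    (hWf : ∀ τ, Wf τ = W - NormedSpace.exp (τ • Ap) * W * NormedSpace.exp (τ • Apᵀ))
    (hinv : ∀ τ : ℝ, 0 ≤ τ → IsUnit (1 + Wf τ * (S - P)))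
    (St : ℝ → Matrix (Fin n) (Fin n) ℝ)
    (hSt : ∀ τ, St τ = (S - P) * (1 + Wf τ * (S - P))⁻¹)
    (U : ℝ → Matrix (Fin n) (Fin n) ℝ)
    (hU : ∀ t, U t = NormedSpace.exp (-((t₁ - t) • Ap)) * (1 + Wf (t₁ - t) * (S - P))) :
    ∀ t s : ℝ, t ≤ s → s ≤ t₁ →
      U t * (U s)⁻¹ =
        NormedSpace.exp ((t - s) • Ap) -
          Wf (t - s) * NormedSpace.exp ((t₁ - t) • Apᵀ) * St (t₁ - s) * NormedSpace.exp ((t₁ - s) • Ap) := by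
  intro t s _ hs
  obtain rfl : Wf = finiteGramian Ap W := funext hWf
  have hN := hinv (t₁ - s) (sub_nonneg.mpr hs)
  have := ((hU s).symm ▸ (Matrix.isUnit_exp _).mul hN : IsUnit (U s)).invertible
  rw [mul_inv_eq_iff_eq_mul_of_invertible, hU t, hU s, hSt, ← neg_smul, ← neg_smul,
    show t - s = (t₁ - s) - (t₁ - t) by ring]
  exact exp_neg_smul_mul_one_add_finiteGramian_mul Ap W (S - P) _ _ hN

/-- Explicit formula for the state transition map `U(t)U(s)⁻¹` of the closed-loop
system, in terms of the Gramian `W(τ) = W - exp(τA₊) W exp(τA₊ᵀ)` and the sliding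
terminal condition `S̃(τ) = (S - P₊)(I + W(τ)(S - P₊))⁻¹`. -/
theorem state_transition_forward_formula
    {n m : ℕ} (Ap : Matrix (Fin n) (Fin n) ℝ) (B : Matrix (Fin n) (Fin m) ℝ)
    (S P : Matrix (Fin n) (Fin n) ℝ) (t₁ : ℝ)
    (hHurwitz : ∀ μ ∈ spectrum ℂ (Ap.map (algebraMap ℝ ℂ)), μ.re < 0)
    (hS : S.IsSymm) (hP : P.IsSymm)
    (W : Matrix (Fin n) (Fin n) ℝ)
    (hW : W = ∫ s in Set.Ioi (0 : ℝ), NormedSpace.exp (s • Ap) * B * Bᵀ * NormedSpace.exp (s • Apᵀ))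
    (Wf : ℝ → Matrix (Fin n) (Fin n) ℝ)
    (hWf : ∀ τ, Wf τ = W - NormedSpace.exp (τ • Ap) * W * NormedSpace.exp (τ • Apᵀ))
    (hinv : ∀ τ : ℝ, 0 ≤ τ → IsUnit (1 + Wf τ * (S - P)))
    (St : ℝ → Matrix (Fin n) (Fin n) ℝ)
    (hSt : ∀ τ, St τ = (S - P) * (1 + Wf τ * (S - P))⁻¹)
    (U : ℝ → Matrix (Fin n) (Fin n) ℝ)
    (hU : ∀ t, U t = NormedSpace.exp (-((t₁ - t) • Ap)) * (1 + Wf (t₁ - t) * (S - P)))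
    (hUinv : ∀ t : ℝ, t ≤ t₁ → IsUnit (U t)) :
    ∀ t s : ℝ, t ≤ s → s ≤ t₁ →
      U t * (U s)⁻¹ =
        NormedSpace.exp ((t - s) • Ap) -
          Wf (t - s) * NormedSpace.exp ((t₁ - t) • Apᵀ) * St (t₁ - s) * NormedSpace.exp ((t₁ - s) • Ap) :=
  state_transition_forward_formula_general Ap S P t₁ W Wf hWf hinv St hSt U hU
end

section
/- Under the same setup, U(t)⁻ᵀ U(s)* = exp((s-t)A₊*) - exp((t₁-t)A₊*) S̃(t₁-t) exp((t₁-s)A₊) W(s-t), and in particular U(t)⁻ᵀ U(t₁)* = exp((t₁-t)A₊*)(I - S̃(t₁-t) W(t₁-t)). -/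
/-!
Write `G τ = W - e^{τA} W e^{τAᵀ}` and `Q = S - P`. With `τ = t₁ - t`, `σ = t₁ - s`, the
transposes are `U(t)ᵀ = (1 + Q G τ) e^{-τAᵀ}`, and the whole formula is the identity
`U(s)ᵀ = U(t)ᵀ · (e^{(τ-σ)Aᵀ} - e^{τAᵀ} Q (1 + G τ Q)⁻¹ e^{σA} G(τ-σ))`. It follows from the
push-through identity `(1 + Q X) Q (1 + X Q)⁻¹ = Q` and the cocycle property
`G τ = G σ + e^{σA} G(τ-σ) e^{σAᵀ}`.
-/

open Matrix MeasureTheory NormedSpace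
open scoped Matrix.Norms.L2Operator

namespace Matrix

variable {ι : Type*} [Fintype ι] [DecidableEq ι]

lemma exp_smul_mul_exp_smul (A : Matrix ι ι ℝ) (a b : ℝ) :
    exp (a • A) * exp (b • A) = exp ((a + b) • A) := by
  rw [← exp_add_of_commute _ _ (((Commute.refl A).smul_left a).smul_right b), add_smul]

lemma exp_smul_mul_exp_neg_smul (A : Matrix ι ι ℝ) (a : ℝ) :
    exp (a • A) * exp (-a • A) = 1 := by
  rw [exp_smul_mul_exp_smul, add_neg_cancel, zero_smul, exp_zero]

lemma exp_neg_smul_mul_exp_smul (A : Matrix ι ι ℝ) (a : ℝ) :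
    exp (-a • A) * exp (a • A) = 1 := by
  rw [exp_smul_mul_exp_smul, neg_add_cancel, zero_smul, exp_zero]

lemma transpose_exp_smul (A : Matrix ι ι ℝ) (a : ℝ) : (exp (a • A))ᵀ = exp (a • Aᵀ) := by
  rw [← exp_transpose, transpose_smul]

lemma IsSymm.integral {X : Type*} [MeasurableSpace X] {μ : Measure X} {f : X → Matrix ι ι ℝ}
    (hf : ∀ x, (f x).IsSymm) : (∫ x, f x ∂μ).IsSymm := by
  have hT : ∀ M : Matrix ι ι ℝ,
      (transposeLinearEquiv ι ι ℝ ℝ).toContinuousLinearEquiv M = Mᵀ := fun _ => rfl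
  rw [IsSymm, ← hT, ← ContinuousLinearEquiv.integral_comp_comm]
  simp only [hT, (hf _).eq]

lemma isSymm_exp_smul_mul_mul_transpose_mul_exp_smul {κ : Type*} [Fintype κ]
    (A : Matrix ι ι ℝ) (B : Matrix ι κ ℝ) (s : ℝ) :
    (exp (s • A) * B * Bᵀ * exp (s • Aᵀ)).IsSymm := by
  simp only [IsSymm, transpose_mul, transpose_transpose, transpose_exp_smul, Matrix.mul_assoc]

/-- For `W` the infinite-horizon Gramian `∫₀^∞ e^{sA} B Bᵀ e^{sAᵀ} ds`, this is the
finite-horizon Gramian `∫₀^τ e^{sA} B Bᵀ e^{sAᵀ} ds`. -/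
noncomputable def truncatedGramian (A W : Matrix ι ι ℝ) (τ : ℝ) : Matrix ι ι ℝ :=
  W - exp (τ • A) * W * exp (τ • Aᵀ)

variable {A W : Matrix ι ι ℝ}

lemma IsSymm.truncatedGramian (hW : W.IsSymm) (τ : ℝ) : (truncatedGramian A W τ).IsSymm := by
  simp only [IsSymm, Matrix.truncatedGramian, transpose_sub, transpose_mul, hW.eq,
    transpose_exp_smul, transpose_transpose, Matrix.mul_assoc]

lemma truncatedGramian_eq_add (σ τ : ℝ) :
    truncatedGramian A W τ =
      truncatedGramian A W σ + exp (σ • A) * truncatedGramian A W (τ - σ) * exp (σ • Aᵀ) := by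
  have hconj : exp (σ • A) * (exp ((τ - σ) • A) * W * exp ((τ - σ) • Aᵀ)) * exp (σ • Aᵀ) =
      exp (τ • A) * W * exp (τ • Aᵀ) := by
    calc _ = exp (σ • A) * exp ((τ - σ) • A) * W * (exp ((τ - σ) • Aᵀ) * exp (σ • Aᵀ)) := by
          simp only [Matrix.mul_assoc]
      _ = _ := by simp only [exp_smul_mul_exp_smul, add_sub_cancel, sub_add_cancel]
  simp only [Matrix.truncatedGramian, Matrix.mul_sub, Matrix.sub_mul, hconj]
  abel

lemma one_add_mul_mul_mul_inv_one_add_mul {R : Type*} [CommRing R] {Q X : Matrix ι ι R}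
    (h : IsUnit (1 + X * Q)) : (1 + Q * X) * (Q * (1 + X * Q)⁻¹) = Q := by
  have hpush : (1 + Q * X) * Q = Q * (1 + X * Q) := by noncomm_ring
  rw [← Matrix.mul_assoc, hpush, Matrix.mul_assoc,
    mul_nonsing_inv _ ((isUnit_iff_isUnit_det _).mp h), Matrix.mul_one]

/-- The closed-loop transition matrix: the paper's `U(t)` is `stateTransition A W Q (t₁ - t)`. -/
noncomputable def stateTransition (A W Q : Matrix ι ι ℝ) (τ : ℝ) : Matrix ι ι ℝ :=
  exp (-(τ • A)) * (1 + truncatedGramian A W τ * Q)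

variable {Q : Matrix ι ι ℝ} {τ : ℝ}

lemma transpose_stateTransition (hQ : Q.IsSymm) (hW : W.IsSymm) (τ : ℝ) :
    (stateTransition A W Q τ)ᵀ = (1 + Q * truncatedGramian A W τ) * exp (-τ • Aᵀ) := by
  rw [stateTransition, transpose_mul, transpose_add, transpose_one, transpose_mul, hQ.eq,
    (hW.truncatedGramian τ).eq, ← neg_smul, transpose_exp_smul]

lemma transpose_stateTransition_eq_mul (hQ : Q.IsSymm) (hW : W.IsSymm)
    (hτ : IsUnit (1 + truncatedGramian A W τ * Q)) (σ : ℝ) :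
    (stateTransition A W Q σ)ᵀ = (stateTransition A W Q τ)ᵀ *
      (exp ((τ - σ) • Aᵀ) - exp (τ • Aᵀ) * (Q * (1 + truncatedGramian A W τ * Q)⁻¹) *
        exp (σ • A) * truncatedGramian A W (τ - σ)) := by
  rw [transpose_stateTransition hQ hW, transpose_stateTransition hQ hW]
  set G := truncatedGramian A W
  have hshift : (1 + Q * G τ) * exp (-τ • Aᵀ) * exp ((τ - σ) • Aᵀ) =
      (1 + Q * G τ) * exp (-σ • Aᵀ) := by
    rw [Matrix.mul_assoc, exp_smul_mul_exp_smul, show -τ + (τ - σ) = -σ by ring]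
  have hcancel : (1 + Q * G τ) * exp (-τ • Aᵀ) *
      (exp (τ • Aᵀ) * (Q * (1 + G τ * Q)⁻¹) * exp (σ • A) * G (τ - σ)) =
        Q * exp (σ • A) * G (τ - σ) := by
    calc _ = (1 + Q * G τ) * (exp (-τ • Aᵀ) * exp (τ • Aᵀ)) * (Q * (1 + G τ * Q)⁻¹) *
          exp (σ • A) * G (τ - σ) := by simp only [Matrix.mul_assoc]
      _ = _ := by
        rw [exp_neg_smul_mul_exp_smul, Matrix.mul_one, one_add_mul_mul_mul_inv_one_add_mul hτ]
  have hcocycle : (1 + Q * G τ) * exp (-σ • Aᵀ) =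
      (1 + Q * G σ) * exp (-σ • Aᵀ) + Q * exp (σ • A) * G (τ - σ) := by
    rw [show G τ = G σ + exp (σ • A) * G (τ - σ) * exp (σ • Aᵀ) from truncatedGramian_eq_add σ τ,
      Matrix.mul_add Q, ← add_assoc, Matrix.add_mul (1 + Q * G σ)]
    simp only [Matrix.mul_assoc, exp_smul_mul_exp_neg_smul, Matrix.mul_one]
  rw [Matrix.mul_sub, hshift, hcancel, hcocycle, add_sub_cancel_right]

lemma transpose_inv_stateTransition_mul_transpose_stateTransition (hQ : Q.IsSymm)
    (hW : W.IsSymm) (hτ : IsUnit (1 + truncatedGramian A W τ * Q)) (σ : ℝ) :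
    ((stateTransition A W Q τ)⁻¹)ᵀ * (stateTransition A W Q σ)ᵀ =
      exp ((τ - σ) • Aᵀ) - exp (τ • Aᵀ) * (Q * (1 + truncatedGramian A W τ * Q)⁻¹) *
        exp (σ • A) * truncatedGramian A W (τ - σ) := by
  have hdet : IsUnit (stateTransition A W Q τ)ᵀ.det := by
    rw [det_transpose, ← isUnit_iff_isUnit_det]
    exact (Matrix.isUnit_exp _).mul hτ
  rw [transpose_nonsing_inv, transpose_stateTransition_eq_mul hQ hW hτ σ,
    nonsing_inv_mul_cancel_left _ _ hdet]

end Matrix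

theorem state_transition_backward_formula_general
    {n m : ℕ} (Ap : Matrix (Fin n) (Fin n) ℝ) (B : Matrix (Fin n) (Fin m) ℝ)
    (S P : Matrix (Fin n) (Fin n) ℝ) (t₁ : ℝ)
    (hS : S.IsSymm) (hP : P.IsSymm)
    (W : Matrix (Fin n) (Fin n) ℝ)
    (hW : W = ∫ s in Set.Ioi (0 : ℝ), exp (s • Ap) * B * Bᵀ * exp (s • Apᵀ))
    (Wf : ℝ → Matrix (Fin n) (Fin n) ℝ)
    (hWf : ∀ τ, Wf τ = W - exp (τ • Ap) * W * exp (τ • Apᵀ))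
    (hinv : ∀ τ : ℝ, 0 ≤ τ → IsUnit (1 + Wf τ * (S - P)))
    (St : ℝ → Matrix (Fin n) (Fin n) ℝ)
    (hSt : ∀ τ, St τ = (S - P) * (1 + Wf τ * (S - P))⁻¹)
    (U : ℝ → Matrix (Fin n) (Fin n) ℝ)
    (hU : ∀ t, U t = exp (-((t₁ - t) • Ap)) * (1 + Wf (t₁ - t) * (S - P))) :
    (∀ t s : ℝ, t ≤ s → s ≤ t₁ →
      ((U t)⁻¹)ᵀ * (U s)ᵀ =
        exp ((s - t) • Apᵀ) -
          exp ((t₁ - t) • Apᵀ) * St (t₁ - t) * exp ((t₁ - s) • Ap) * Wf (s - t)) ∧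
    (∀ t : ℝ, t ≤ t₁ →
      ((U t)⁻¹)ᵀ * (U t₁)ᵀ =
        exp ((t₁ - t) • Apᵀ) * (1 - St (t₁ - t) * Wf (t₁ - t))) := by
  obtain rfl : Wf = truncatedGramian Ap W := funext hWf
  have hU' : ∀ t, U t = stateTransition Ap W (S - P) (t₁ - t) := hU
  have hWsymm : W.IsSymm :=
    hW ▸ IsSymm.integral fun s => isSymm_exp_smul_mul_mul_transpose_mul_exp_smul Ap B s
  have backward : ∀ t s : ℝ, t ≤ s → s ≤ t₁ →
      ((U t)⁻¹)ᵀ * (U s)ᵀ = exp ((s - t) • Apᵀ) - exp ((t₁ - t) • Apᵀ) * St (t₁ - t) *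
        exp ((t₁ - s) • Ap) * truncatedGramian Ap W (s - t) := by
    intro t s hts hst₁
    rw [hU', hU', hSt, transpose_inv_stateTransition_mul_transpose_stateTransition (hS.sub hP)
      hWsymm (hinv _ (by linarith)), sub_sub_sub_cancel_left]
  refine ⟨backward, fun t ht => ?_⟩
  rw [backward t t₁ ht le_rfl, sub_self, zero_smul, exp_zero, Matrix.mul_one, Matrix.mul_sub,
    Matrix.mul_one, Matrix.mul_assoc]

/-- Explicit formula for the backward state transition map `U(t)⁻ᵀ U(s)ᵀ` of the
closed-loop system, and its specialization at `s = t₁`. -/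
theorem state_transition_backward_formula
    {n m : ℕ} (Ap : Matrix (Fin n) (Fin n) ℝ) (B : Matrix (Fin n) (Fin m) ℝ)
    (S P : Matrix (Fin n) (Fin n) ℝ) (t₁ : ℝ)
    (hHurwitz : ∀ μ ∈ spectrum ℂ (Ap.map (algebraMap ℝ ℂ)), μ.re < 0)
    (hS : S.IsSymm) (hP : P.IsSymm)
    (W : Matrix (Fin n) (Fin n) ℝ)
    (hW : W = ∫ s in Set.Ioi (0 : ℝ), exp (s • Ap) * B * Bᵀ * exp (s • Apᵀ))
    (Wf : ℝ → Matrix (Fin n) (Fin n) ℝ)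
    (hWf : ∀ τ, Wf τ = W - exp (τ • Ap) * W * exp (τ • Apᵀ))
    (hinv : ∀ τ : ℝ, 0 ≤ τ → IsUnit (1 + Wf τ * (S - P)))
    (St : ℝ → Matrix (Fin n) (Fin n) ℝ)
    (hSt : ∀ τ, St τ = (S - P) * (1 + Wf τ * (S - P))⁻¹)
    (U : ℝ → Matrix (Fin n) (Fin n) ℝ)
    (hU : ∀ t, U t = exp (-((t₁ - t) • Ap)) * (1 + Wf (t₁ - t) * (S - P)))
    (hUinv : ∀ t : ℝ, t ≤ t₁ → IsUnit (U t)) :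
    (∀ t s : ℝ, t ≤ s → s ≤ t₁ →
      ((U t)⁻¹)ᵀ * (U s)ᵀ =
        exp ((s - t) • Apᵀ) -
          exp ((t₁ - t) • Apᵀ) * St (t₁ - t) * exp ((t₁ - s) • Ap) * Wf (s - t)) ∧
    (∀ t : ℝ, t ≤ t₁ →
      ((U t)⁻¹)ᵀ * (U t₁)ᵀ =
        exp ((t₁ - t) • Apᵀ) * (1 - St (t₁ - t) * Wf (t₁ - t))) :=
  state_transition_backward_formula_general Ap B S P t₁ hS hP W hW Wf hWf hinv St hSt U hU
end

section
/- Consider the closed-loop DAE E ẋ = (A - BB*P(t))x with E = [[I,0],[0,0]], where P(t) = P₊ + P_Δ(t) and the second block column of P_Δ(t) is zero. Then the lower-left block of A - BB*P(t) restricted to the (2,2) entry equals A₊₂₂ (the (2,2) block of A₊ = A - BB*P₊), and if A₊₂₂ is invertible, the DAE can be written in decoupled (strangeness-free) form ẋ₁ = Â₁(t)x₁, x₂ = Â₂(t)x₁, with Â₁(t) = Ā - B̄B̄*P_{Δ,1}(t) and Â₂(t) = -A₊₂₂⁻¹A₊₂₁ + A₊₂₂⁻¹B₂B̄*P_{Δ,1}(t),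 where Ā = A₊₁₁ - A₊₁₂A₊₂₂⁻¹A₊₂₁ and B̄ = B₁ - A₊₁₂A₊₂₂⁻¹B₂. -/
/-!
The feedback `BBᵀP_Δ(t)` acts only through the first block column of `P_Δ(t)`, so it leaves
the `(2,2)` block of `A₊` untouched. Solving the algebraic row for `x₂` with `A₊₂₂⁻¹` and
substituting into the differential row turns `A₊` into its Schur complement `Ā` and `B₁` into
`B̄`, with the same gain `B̄ᵀP_{Δ,1}(t)`.
-/

open Matrix

namespace Matrix

variable {R : Type*}

theorem toBlocks₂₂_sub_mul_fromBlocks_zero_right [Ring R] {k l m n o p : Type*}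
    [Fintype k] [Fintype l] (A : Matrix (m ⊕ n) (o ⊕ p) R) (M : Matrix (m ⊕ n) (k ⊕ l) R)
    (P₁ : Matrix k o R) (P₂ : Matrix l o R) :
    (A - M * fromBlocks P₁ (0 : Matrix k p R) P₂ 0).toBlocks₂₂ = A.toBlocks₂₂ := by
  ext i j
  simp [toBlocks₂₂, mul_apply, Fintype.sum_sum_type]

section BlockElimination

variable [CommRing R] {l n p : Type*} [Fintype l] [Fintype n] [Fintype p] [DecidableEq n]

theorem eq_neg_inv_mul_mulVec_of_eq_mulVec_add_mulVec {A₂₂ : Matrix n n R} (hA₂₂ : IsUnit A₂₂)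
    {A₂₁ : Matrix n l R} {x₁ : l → R} {x₂ : n → R} (h : 0 = A₂₁ *ᵥ x₁ + A₂₂ *ᵥ x₂) :
    x₂ = -(A₂₂⁻¹ * A₂₁) *ᵥ x₁ := by
  have hinv : A₂₂⁻¹ * A₂₂ = 1 := nonsing_inv_mul _ ((isUnit_iff_isUnit_det _).mp hA₂₂)
  calc x₂ = A₂₂⁻¹ *ᵥ (A₂₂ *ᵥ x₂) := by rw [mulVec_mulVec, hinv, one_mulVec]
    _ = A₂₂⁻¹ *ᵥ -(A₂₁ *ᵥ x₁) := by rw [eq_neg_of_add_eq_zero_right h.symm]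
    _ = -(A₂₂⁻¹ * A₂₁) *ᵥ x₁ := by rw [mulVec_neg, mulVec_mulVec, neg_mulVec]

theorem closedLoop_block_elimination {A₁₁ : Matrix l l R} {A₁₂ : Matrix l n R}
    {A₂₁ : Matrix n l R} {A₂₂ : Matrix n n R} {B₁ : Matrix l p R} {B₂ : Matrix n p R}
    (K : Matrix p l R) (hA₂₂ : IsUnit A₂₂) {x₁ y₁ : l → R} {x₂ : n → R}
    (h₂ : 0 = (A₂₁ - B₂ * K) *ᵥ x₁ + A₂₂ *ᵥ x₂)
    (h₁ : y₁ = (A₁₁ - B₁ * K) *ᵥ x₁ + A₁₂ *ᵥ x₂) :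
    x₂ = (-(A₂₂⁻¹ * A₂₁) + A₂₂⁻¹ * B₂ * K) *ᵥ x₁ ∧
      y₁ = (A₁₁ - A₁₂ * A₂₂⁻¹ * A₂₁ - (B₁ - A₁₂ * A₂₂⁻¹ * B₂) * K) *ᵥ x₁ := by
  have hx₂ := eq_neg_inv_mul_mulVec_of_eq_mulVec_add_mulVec hA₂₂ h₂
  have hgain : -(A₂₂⁻¹ * (A₂₁ - B₂ * K)) = -(A₂₂⁻¹ * A₂₁) + A₂₂⁻¹ * B₂ * K := by
    simp only [Matrix.mul_sub, Matrix.mul_assoc]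
    abel
  have hschur : A₁₁ - B₁ * K + A₁₂ * (-(A₂₂⁻¹ * A₂₁) + A₂₂⁻¹ * B₂ * K) =
      A₁₁ - A₁₂ * A₂₂⁻¹ * A₂₁ - (B₁ - A₁₂ * A₂₂⁻¹ * B₂) * K := by
    simp only [Matrix.mul_add, Matrix.sub_mul, Matrix.mul_neg, Matrix.mul_assoc]
    abel
  rw [hgain] at hx₂
  refine ⟨hx₂, ?_⟩
  rw [h₁, hx₂, mulVec_mulVec, ← add_mulVec, hschur]

end BlockElimination

end Matrix

theorem closed_loop_dae_strangeness_free_general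
    {d a m : ℕ}
    (Ap11 : Matrix (Fin d) (Fin d) ℝ) (Ap12 : Matrix (Fin d) (Fin a) ℝ)
    (Ap21 : Matrix (Fin a) (Fin d) ℝ) (Ap22 : Matrix (Fin a) (Fin a) ℝ)
    (B1 : Matrix (Fin d) (Fin m) ℝ) (B2 : Matrix (Fin a) (Fin m) ℝ)
    (PD1 : ℝ → Matrix (Fin d) (Fin d) ℝ)
    (hAp22 : IsUnit Ap22)
    (Apf : Matrix (Fin d ⊕ Fin a) (Fin d ⊕ Fin a) ℝ)
    (hApf : Apf = fromBlocks Ap11 Ap12 Ap21 Ap22)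
    (Bf : Matrix (Fin d ⊕ Fin a) (Fin m) ℝ)
    (PDf : ℝ → Matrix (Fin d ⊕ Fin a) (Fin d ⊕ Fin a) ℝ)
    (hPDf : ∀ t, PDf t =
      fromBlocks (PD1 t) 0 (-((Ap22ᵀ)⁻¹ * Ap12ᵀ * PD1 t)) 0)
    (Abar : Matrix (Fin d) (Fin d) ℝ) (hAbar : Abar = Ap11 - Ap12 * Ap22⁻¹ * Ap21)
    (Bbar : Matrix (Fin d) (Fin m) ℝ) (hBbar : Bbar = B1 - Ap12 * Ap22⁻¹ * B2)
    (Ahat1 : ℝ → Matrix (Fin d) (Fin d) ℝ)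
    (hAhat1 : ∀ t, Ahat1 t = Abar - Bbar * Bbarᵀ * PD1 t)
    (Ahat2 : ℝ → Matrix (Fin a) (Fin d) ℝ)
    (hAhat2 : ∀ t, Ahat2 t = -(Ap22⁻¹ * Ap21) + Ap22⁻¹ * B2 * Bbarᵀ * PD1 t) :
    (∀ t : ℝ, (Apf - Bf * Bfᵀ * PDf t).toBlocks₂₂ = Ap22) ∧
    (∀ t : ℝ, ∀ v₁ d₁ : Fin d → ℝ, ∀ v₂ : Fin a → ℝ,
      (0 = (Ap21 - B2 * Bbarᵀ * PD1 t) *ᵥ v₁ + Ap22 *ᵥ v₂) →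
      (d₁ = (Ap11 - B1 * Bbarᵀ * PD1 t) *ᵥ v₁ + Ap12 *ᵥ v₂) →
      v₂ = Ahat2 t *ᵥ v₁ ∧ d₁ = Ahat1 t *ᵥ v₁) := by
  refine ⟨fun t => ?_, fun t v₁ d₁ v₂ h₂ h₁ => ?_⟩
  · rw [hPDf t, toBlocks₂₂_sub_mul_fromBlocks_zero_right, hApf, toBlocks_fromBlocks₂₂]
  · rw [Matrix.mul_assoc B2] at h₂
    rw [Matrix.mul_assoc B1] at h₁
    have h := closedLoop_block_elimination (Bbarᵀ * PD1 t) hAp22 h₂ h₁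
    rw [← hAbar, ← hBbar] at h
    simpa only [hAhat1, hAhat2, Matrix.mul_assoc] using h

/-- Decoupling of the closed-loop DAE. With `P(t) = P₊ + P_Δ(t)` where the second
block column of `P_Δ(t)` vanishes, the `(2,2)` block of the closed-loop matrix
`A₊ - BBᵀP_Δ(t)` equals `A₊₂₂`; and if `A₊₂₂` is invertible, any state `(v₁, v₂)`
satisfying the algebraic (second) block row, together with a derivative value `d₁`
satisfying the differential (first) block row, fulfills the strangeness-free
decoupled form `v₂ = Â₂(t)v₁` and `d₁ = Â₁(t)v₁` with
`Â₁(t) = Ā - B̄B̄ᵀP_{Δ,1}(t)`, `Â₂(t) = -A₊₂₂⁻¹A₊₂₁ + A₊₂₂⁻¹B₂B̄ᵀP_{Δ,1}(t)`,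
`Ā = A₊₁₁ - A₊₁₂A₊₂₂⁻¹A₊₂₁`, `B̄ = B₁ - A₊₁₂A₊₂₂⁻¹B₂`. -/
theorem closed_loop_dae_strangeness_free
    {d a m : ℕ}
    (Ap11 : Matrix (Fin d) (Fin d) ℝ) (Ap12 : Matrix (Fin d) (Fin a) ℝ)
    (Ap21 : Matrix (Fin a) (Fin d) ℝ) (Ap22 : Matrix (Fin a) (Fin a) ℝ)
    (B1 : Matrix (Fin d) (Fin m) ℝ) (B2 : Matrix (Fin a) (Fin m) ℝ)
    (PD1 : ℝ → Matrix (Fin d) (Fin d) ℝ)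
    (hAp22 : IsUnit Ap22)
    (Apf : Matrix (Fin d ⊕ Fin a) (Fin d ⊕ Fin a) ℝ)
    (hApf : Apf = fromBlocks Ap11 Ap12 Ap21 Ap22)
    (Bf : Matrix (Fin d ⊕ Fin a) (Fin m) ℝ)
    (hBf : Bf = fromRows B1 B2)
    (PDf : ℝ → Matrix (Fin d ⊕ Fin a) (Fin d ⊕ Fin a) ℝ)
    (hPDf : ∀ t, PDf t =
      fromBlocks (PD1 t) 0 (-((Ap22ᵀ)⁻¹ * Ap12ᵀ * PD1 t)) 0)
    (Abar : Matrix (Fin d) (Fin d) ℝ) (hAbar : Abar = Ap11 - Ap12 * Ap22⁻¹ * Ap21)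
    (Bbar : Matrix (Fin d) (Fin m) ℝ) (hBbar : Bbar = B1 - Ap12 * Ap22⁻¹ * B2)
    (Ahat1 : ℝ → Matrix (Fin d) (Fin d) ℝ)
    (hAhat1 : ∀ t, Ahat1 t = Abar - Bbar * Bbarᵀ * PD1 t)
    (Ahat2 : ℝ → Matrix (Fin a) (Fin d) ℝ)
    (hAhat2 : ∀ t, Ahat2 t = -(Ap22⁻¹ * Ap21) + Ap22⁻¹ * B2 * Bbarᵀ * PD1 t) :
    (∀ t : ℝ, (Apf - Bf * Bfᵀ * PDf t).toBlocks₂₂ = Ap22) ∧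
    (∀ t : ℝ, ∀ v₁ d₁ : Fin d → ℝ, ∀ v₂ : Fin a → ℝ,
      (0 = (Ap21 - B2 * Bbarᵀ * PD1 t) *ᵥ v₁ + Ap22 *ᵥ v₂) →
      (d₁ = (Ap11 - B1 * Bbarᵀ * PD1 t) *ᵥ v₁ + Ap12 *ᵥ v₂) →
      v₂ = Ahat2 t *ᵥ v₁ ∧ d₁ = Ahat1 t *ᵥ v₁) :=
  closed_loop_dae_strangeness_free_general Ap11 Ap12 Ap21 Ap22 B1 B2 PD1 hAp22 Apf hApf Bf PDf hPDf
    Abar hAbar Bbar hBbar Ahat1 hAhat1 Ahat2 hAhat2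
end
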